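/- The graph curve matroid of the complete graph K₄ is the uniform matroid U_{2,4}: a set of vertices of K₄ is independent in M_{K₄} if and only if it has at most 2 elements. -/

import Mathlib

/-- A finite undirected multigraph on vertex type `V` with edge type `E`:
each edge has an unordered pair of endpoints (possibly a loop). -/
structure Multigraph (V E : Type*) where
  ends : E → Sym2 V

namespace Multigraph

variable {V E : Type*} (G : Multigraph V E)

/-- `δ(A)`: the set of edges incident to at least one vertex of `A`. -/
def inc (A : Set V) : Set E := {e | ∃ v ∈ A, v ∈ G.ends e}

/-- Number of connected components of the spanning subgraph of `G`
with edge set `B` (on the full vertex set `V`). -/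
noncomputable def numComponentsEdges (B : Set E) : ℕ :=
  Nat.card (Quot (fun u v : V => ∃ e ∈ B, G.ends e = s(u, v)))

/-- Number of connected components `ω(S)` of the subgraph of `G` induced on `S`. -/
noncomputable def numComponentsSub (S : Set V) : ℕ :=
  Nat.card (Quot (fun x y : S => ∃ e, G.ends e = s(x.1, y.1)))

/-- Rank function of the cycle (graphic) matroid of `G`:
`r(B) = |V| - (number of components of (V, B))`. -/
noncomputable def cycleRank (B : Set E) : ℕ :=
  Nat.card V - G.numComponentsEdges B

/-- Rank function `r*` of the bond (cographic) matroid of `G`: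
`r*(B) = |B| + r(E - B) - r(E)`. -/
noncomputable def bondRank (B : Set E) : ℕ :=
  B.ncard + G.cycleRank Bᶜ - G.cycleRank Set.univ

/-- `G` is connected. -/
def Connected : Prop := G.numComponentsEdges Set.univ = 1

/-- `G` is 2-edge-connected: it is connected and deleting any single edge
leaves it connected. -/
def TwoEdgeConnected : Prop :=
  G.Connected ∧ ∀ e : E, G.numComponentsEdges {e}ᶜ = 1

/-- `G` is 2-vertex-connected: it is connected and deleting any single vertex
leaves it connected. -/
def TwoVertexConnected : Prop :=
  G.Connected ∧ ∀ v : V, G.numComponentsSub {v}ᶜ = 1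

/-- `G` has no loops. -/
def Loopless : Prop := ∀ e : E, ¬ (G.ends e).IsDiag

open Classical in
/-- The degree of a vertex, with loops counting twice. -/
noncomputable def degree [Fintype E] (v : V) : ℕ :=
  ∑ e : E, (if G.ends e = s(v, v) then 2 else if v ∈ G.ends e then 1 else 0)

/-- `G` is trivalent: every vertex has degree `3`. -/
def Trivalent [Fintype E] : Prop := ∀ v : V, G.degree v = 3

/-- `A ⊆ V` is the vertex set of a cycle `v₁, …, vₙ, v₁` of `G`: there are
pairwise distinct vertices `f 0, …, f (n-1)` with range `A` and pairwise
distinct edges joining cyclically consecutive vertices. -/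
def IsCycleSet (A : Set V) : Prop :=
  ∃ n : ℕ, 0 < n ∧ ∃ f : ZMod n → V, Function.Injective f ∧ Set.range f = A ∧
    ∃ e : ZMod n → E, Function.Injective e ∧ ∀ i, G.ends (e i) = s(f i, f (i + 1))

/-- The subgraph induced on `A` contains a cycle. -/
def Cyclic (A : Set V) : Prop := ∃ C ⊆ A, G.IsCycleSet C

/-- The subgraph induced on `A` is acyclic (a forest). -/
def Acyclic (A : Set V) : Prop := ¬ G.Cyclic A

/-- `A` is a circuit of the graph curve matroid `M_G`: `A` is nonempty,
`r*(δ(A)) ≤ |A|`, and no proper nonempty subset `A'` satisfies `r*(δ(A')) ≤ |A'|`. -/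
noncomputable def IsCircuitMG (A : Set V) : Prop :=
  A.Nonempty ∧ G.bondRank (G.inc A) ≤ A.ncard ∧
    ∀ A' : Set V, A' ⊂ A → A'.Nonempty → A'.ncard < G.bondRank (G.inc A')

/-- `A` is dependent in the graph curve matroid `M_G`, i.e. contains a circuit. -/
noncomputable def DepMG (A : Set V) : Prop := ∃ C ⊆ A, G.IsCircuitMG C

/-- `A` is independent in the graph curve matroid `M_G`. -/
noncomputable def IndepMG (A : Set V) : Prop := ¬ G.DepMG A

/-- The rank function of the graph curve matroid `M_G`:
the maximal cardinality of an independent subset. -/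
noncomputable def rankMG (A : Set V) : ℕ :=
  sSup {n | ∃ I ⊆ A, G.IndepMG I ∧ I.ncard = n}

/-- `B` is a basis of the graph curve matroid `M_G`:
a maximal independent set. -/
noncomputable def IsBasisMG (B : Set V) : Prop :=
  G.IndepMG B ∧ ∀ I : Set V, G.IndepMG I → B ⊆ I → I = B

end Multigraph

/-- The complete graph `K₄`, as a multigraph on vertex type `Fin 4` whose
edges are the ordered pairs `(i, j)` with `i < j`. -/
def K4 : Multigraph (Fin 4) {p : Fin 4 × Fin 4 // p.1 < p.2} :=
  ⟨fun p => s(p.1.1, p.1.2)⟩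

/-! For a connected graph `r*(B) = |B| + 1 - ω(V, E ∖ B)`, and in `(V, E ∖ δ(A))` the vertices of `A`
are isolated while the rest is the subgraph induced on `Aᶜ`, so `ω(V, E ∖ δ(A)) = |A| + ω(G[Aᶜ])`.
In `K₄` this gives `r*(δ(A)) = 2, 3, 3, 3` for `|A| = 1, 2, 3, 4`: the sets with `r*(δ(A)) ≤ |A|`
are those of size at least three, so the circuits of `M_{K₄}` are the three-element sets. -/

theorem Nat.card_quot_eq_one_of_forall_ne {α : Type*} [Nonempty α] {r : α → α → Prop}
    (h : ∀ x y, x ≠ y → r x y) : Nat.card (Quot r) = 1 := by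
  refine Nat.card_eq_one_iff_unique.mpr ⟨⟨fun p q => ?_⟩, ‹Nonempty α›.map (Quot.mk r)⟩
  induction p using Quot.ind with | _ x =>
  induction q using Quot.ind with | _ y =>
  by_cases hxy : x = y
  · rw [hxy]
  · exact Quot.sound (h x y hxy)

namespace Multigraph

variable {V E : Type*} (G : Multigraph V E)

def IsComplete : Prop := ∀ u v : V, u ≠ v → ∃ e, G.ends e = s(u, v)

section Components

variable {G}

theorem IsComplete.numComponentsSub_eq_one (hG : G.IsComplete) {S : Set V} (hS : S.Nonempty) :
    G.numComponentsSub S = 1 :=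
  have := hS.to_subtype
  Nat.card_quot_eq_one_of_forall_ne fun x y hxy => hG x y (Subtype.val_injective.ne hxy)

theorem IsComplete.connected [Nonempty V] (hG : G.IsComplete) : G.Connected :=
  Nat.card_quot_eq_one_of_forall_ne fun u v huv => (hG u v huv).imp fun _ he => ⟨trivial, he⟩

theorem numComponentsSub_empty : G.numComponentsSub ∅ = 0 :=
  Nat.card_of_isEmpty

end Components

theorem notMem_of_notMem_inc {A : Set V} {e : E} (he : e ∉ G.inc A) {v : V}
    (hv : v ∈ G.ends e) : v ∉ A :=
  fun hvA => he ⟨v, hvA, hv⟩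

theorem notMem_inc_of_ends_eq {A : Set V} {e : E} {u v : V} (he : G.ends e = s(u, v))
    (hu : u ∉ A) (hv : v ∉ A) : e ∉ G.inc A := by
  rintro ⟨w, hwA, hw⟩
  rw [he, Sym2.mem_iff] at hw
  rcases hw with rfl | rfl <;> contradiction

def componentsComplIncEquiv (A : Set V) [DecidablePred (· ∈ A)] :
    Quot (fun u v : V => ∃ e ∈ (G.inc A)ᶜ, G.ends e = s(u, v)) ≃
      A ⊕ Quot (fun x y : ↥Aᶜ => ∃ e, G.ends e = s(x.1, y.1)) where
  toFun := Quot.lift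
    (fun v => if hv : v ∈ A then .inl ⟨v, hv⟩ else .inr (Quot.mk _ ⟨v, hv⟩))
    (by
      rintro u v ⟨e, he, huv⟩
      have hu := G.notMem_of_notMem_inc he (huv ▸ Sym2.mem_mk_left u v)
      have hv := G.notMem_of_notMem_inc he (huv ▸ Sym2.mem_mk_right u v)
      simp only [hu, hv, dite_false]
      exact congrArg Sum.inr (Quot.sound ⟨e, huv⟩))
  invFun := Sum.elim (fun a => Quot.mk _ a.1) <| Quot.lift (fun x => Quot.mk _ x.1)
    fun x y ⟨e, he⟩ => Quot.sound ⟨e, G.notMem_inc_of_ends_eq he x.2 y.2, he⟩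
  left_inv q := by
    induction q using Quot.ind with | _ v =>
    by_cases hv : v ∈ A <;> simp [hv]
  right_inv p := by
    rcases p with a | q
    · simp [a.2]
    · induction q using Quot.ind with | _ x =>
      simp [show x.1 ∉ A from x.2]

theorem numComponentsEdges_compl_inc [Finite V] (A : Set V) :
    G.numComponentsEdges (G.inc A)ᶜ = A.ncard + G.numComponentsSub Aᶜ := by
  classical
  rw [numComponentsEdges, Nat.card_congr (G.componentsComplIncEquiv A), Nat.card_sum,
    Nat.card_coe_set_eq, numComponentsSub]

theorem numComponentsEdges_le_card [Finite V] (B : Set E) :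
    G.numComponentsEdges B ≤ Nat.card V :=
  Nat.card_le_card_of_surjective _ Quot.mk_surjective

theorem bondRank_eq_of_connected [Finite V] (hG : G.Connected) (B : Set E) :
    G.bondRank B = B.ncard + 1 - G.numComponentsEdges Bᶜ := by
  have : Nonempty V := by
    by_contra hV
    rw [not_nonempty_iff] at hV
    exact absurd hG (by simp [Connected, numComponentsEdges])
  have : Nonempty (Quot _) := ‹Nonempty V›.map (Quot.mk fun u v => ∃ e ∈ Bᶜ, G.ends e = s(u, v))
  have hpos : 0 < G.numComponentsEdges Bᶜ := Nat.card_pos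
  have hle := G.numComponentsEdges_le_card Bᶜ
  rw [bondRank, cycleRank, cycleRank, hG]
  omega

section Uniform

variable {G} [Finite V] {k : ℕ}
  (hk : ∀ A : Set V, A.Nonempty → (G.bondRank (G.inc A) ≤ A.ncard ↔ k < A.ncard))
include hk

theorem isCircuitMG_iff_of_bondRank_inc_le_iff (C : Set V) :
    G.IsCircuitMG C ↔ C.ncard = k + 1 := by
  constructor
  · rintro ⟨hne, hle, hmin⟩
    have hlt := (hk C hne).mp hle
    by_contra hcard_ne
    obtain ⟨C', hC'C, hcard⟩ := Set.exists_subset_card_eq (show k + 1 ≤ C.ncard by omega)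
    have hne' : C'.Nonempty := Set.nonempty_of_ncard_ne_zero (by omega)
    have hss : C' ⊂ C := hC'C.ssubset_of_ne (by rintro rfl; omega)
    have := hmin C' hss hne'
    have := (hk C' hne').mpr (by omega)
    omega
  · intro hcard
    have hne : C.Nonempty := Set.nonempty_of_ncard_ne_zero (by omega)
    refine ⟨hne, (hk C hne).mpr (by omega), fun A' hA' hne' => ?_⟩
    have := Set.ncard_lt_ncard hA'
    by_contra! hle
    have := (hk A' hne').mp hle
    omega

theorem indepMG_iff_of_bondRank_inc_le_iff (A : Set V) : G.IndepMG A ↔ A.ncard ≤ k := by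
  simp only [IndepMG, DepMG, isCircuitMG_iff_of_bondRank_inc_le_iff hk, not_exists, not_and]
  constructor
  · intro h
    by_contra! hA
    obtain ⟨C, hCA, hC⟩ := Set.exists_subset_card_eq (show k + 1 ≤ A.ncard by omega)
    exact h C hCA hC
  · intro hA C hCA hC
    have := Set.ncard_le_ncard hCA
    omega

end Uniform

end Multigraph

open Multigraph

theorem K4_isComplete : K4.IsComplete := by
  unfold Multigraph.IsComplete
  decide

theorem K4_ncard_inc (s : Finset (Fin 4)) :
    (K4.inc s).ncard = (Finset.univ.filter fun e => ∃ v ∈ s, v ∈ K4.ends e).card := by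
  rw [← Set.ncard_coe_finset]
  congr 1
  ext e
  simp [Multigraph.inc]

theorem K4_numComponentsSub_compl (s : Finset (Fin 4)) :
    K4.numComponentsSub (↑s)ᶜ = if s = Finset.univ then 0 else 1 := by
  split_ifs with hs
  · simp [hs, numComponentsSub_empty]
  · exact K4_isComplete.numComponentsSub_eq_one
      (Set.nonempty_compl.mpr (by simpa [← Finset.coe_univ] using hs))

theorem K4_bondRank_inc_le_iff (A : Set (Fin 4)) (hA : A.Nonempty) :
    K4.bondRank (K4.inc A) ≤ A.ncard ↔ 2 < A.ncard := by
  obtain ⟨s, rfl⟩ := A.toFinite.exists_finset_coe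
  rw [Finset.coe_nonempty] at hA
  rw [bondRank_eq_of_connected _ K4_isComplete.connected, numComponentsEdges_compl_inc,
    K4_numComponentsSub_compl, K4_ncard_inc, Set.ncard_coe_finset]
  revert s
  decide

/-- The graph curve matroid of `K₄` is the uniform matroid
`U_{2,4}`: a vertex set is independent in `M_{K₄}` iff it has at most 2 elements. -/
theorem graphCurveMatroid_K4_eq_U24 (A : Set (Fin 4)) :
    K4.IndepMG A ↔ A.ncard ≤ 2 :=
  indepMG_iff_of_bondRank_inc_le_iff K4_bondRank_inc_le_iff A
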